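/- Let (X,d,μ) be a Borel metric measure space in which every closed ball has positive finite measure. The following are equivalent: (i) X is totally bounded; (ii) μ(X) < ∞ and inf{μ(B(x,s)) : x ∈ X} > 0 for every s > 0; (iii) X is bounded and s-doubling for every s > 0. -/

import Mathlib

/-!
If `X` is totally bounded, a finite `s/2`-net bounds every `μ(B(x,s))` below by the smallest of
finitely many positive numbers. Conversely, if `X` is not totally bounded, it contains an infinite
`ε`-separated sequence, whose balls of radius `ε/3` are disjoint; a uniform lower bound on their
measures then contradicts `μ(X) < ∞`. Finite total mass divided by a uniform lower bound is a doubling constant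
at every scale. Finally, if `X` is bounded and doubling at every scale, iterating the doubling
inequality `k` times with `2^k s ≥ diam X` gives `μ(X) ≤ C μ(B(x,s))` uniformly in `x`.
-/

open MeasureTheory Metric Filter Set

/-- `X` is `s`-doubling: there is `γ ≥ 1` with `μ(B(x,2s)) ≤ γ μ(B(x,s))` for all `x`. -/
def DoublingAt {X : Type*} [PseudoMetricSpace X] [MeasurableSpace X]
    (μ : MeasureTheory.Measure X) (s : ℝ) : Prop :=
  ∃ γ : ℝ, 1 ≤ γ ∧ ∀ x : X,
    μ (closedBall x (2 * s)) ≤ ENNReal.ofReal γ * μ (closedBall x s)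

section PseudoMetric

variable {X : Type*} [PseudoMetricSpace X]

lemma exists_pairwise_le_dist_of_not_totallyBounded {s : Set X} (h : ¬TotallyBounded s) :
    ∃ ε > 0, ∃ u : ℕ → X, (∀ n, u n ∈ s) ∧ Pairwise fun m n ↦ ε ≤ dist (u m) (u n) := by
  simp only [totallyBounded_iff, not_forall, not_exists, not_and, exists_prop] at h
  obtain ⟨ε, hε, hnet⟩ := h
  have hstep : ∀ t : Set X, t.Finite → ∃ x, x ∈ s ∧ ∀ y ∈ t, ε ≤ dist x y := by
    intro t ht
    obtain ⟨x, hxs, hx⟩ := not_subset.mp (hnet t ht)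
    simp only [mem_iUnion, mem_ball, not_exists, not_lt] at hx
    exact ⟨x, hxs, hx⟩
  obtain ⟨u, hu⟩ := seq_of_forall_finite_exists hstep
  have hlt : ∀ m n, m < n → ε ≤ dist (u m) (u n) := fun m n hmn ↦
    dist_comm (u n) (u m) ▸ (hu n).2 _ (mem_image_of_mem u hmn)
  refine ⟨ε, hε, u, fun n ↦ (hu n).1, fun m n hmn ↦ ?_⟩
  rcases hmn.lt_or_gt with hmn | hnm
  · exact hlt m n hmn
  · exact dist_comm (u n) (u m) ▸ hlt n m hnm

lemma closedBall_eq_univ_of_diam_le (hb : Bornology.IsBounded (univ : Set X)) {R : ℝ}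
    (hR : diam (univ : Set X) ≤ R) (x : X) : closedBall x R = univ :=
  eq_univ_of_forall fun y ↦ (dist_le_diam_of_mem hb (mem_univ y) (mem_univ x)).trans hR

variable [MeasurableSpace X] {μ : Measure X} {s : ℝ}

lemma measure_univ_lt_top_of_isBounded (hb : Bornology.IsBounded (univ : Set X))
    (hfin : ∀ (x : X) (s : ℝ), 0 < s → μ (closedBall x s) < ⊤) : μ univ < ⊤ := by
  rcases isEmpty_or_nonempty X with _ | ⟨⟨x⟩⟩
  · simp
  rw [← closedBall_eq_univ_of_diam_le hb (le_add_of_nonneg_right zero_le_one) x]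
  exact hfin x _ (add_pos_of_nonneg_of_pos diam_nonneg one_pos)

lemma TotallyBounded.lt_iInf_measure_closedBall (htb : TotallyBounded (univ : Set X))
    (hpos : ∀ (x : X) (s : ℝ), 0 < s → 0 < μ (closedBall x s)) (hs : 0 < s) :
    0 < ⨅ x, μ (closedBall x s) := by
  obtain ⟨t, htf, hcover⟩ := totallyBounded_iff.mp htb (s / 2) (half_pos hs)
  set c := htf.toFinset.inf fun y ↦ μ (closedBall y (s / 2))
  have hc : 0 < c := (Finset.lt_inf_iff ENNReal.zero_lt_top).mpr fun y _ ↦ hpos y _ (half_pos hs)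
  refine hc.trans_le (le_iInf fun x ↦ ?_)
  obtain ⟨y, hyt, hxy⟩ := mem_iUnion₂.mp (hcover (mem_univ x))
  have hsub : closedBall y (s / 2) ⊆ closedBall x s :=
    closedBall_subset_closedBall' (by linarith [dist_comm x y ▸ (mem_ball.mp hxy).le])
  exact (Finset.inf_le (htf.mem_toFinset.mpr hyt)).trans (measure_mono hsub)

lemma doublingAt_of_le_mul {C : ENNReal} (hC : C ≠ ⊤)
    (h : ∀ x : X, μ (closedBall x (2 * s)) ≤ C * μ (closedBall x s)) : DoublingAt μ s := by
  refine ⟨max 1 C.toReal, le_max_left _ _, fun x ↦ (h x).trans ?_⟩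
  gcongr
  rw [ENNReal.le_ofReal_iff_toReal_le hC (zero_le_one.trans (le_max_left _ _))]
  exact le_max_right _ _

lemma doublingAt_of_measure_univ_lt_top (hμ : μ univ < ⊤) (hs : 0 < ⨅ x, μ (closedBall x s)) :
    DoublingAt μ s := by
  set I := ⨅ x, μ (closedBall x s)
  refine doublingAt_of_le_mul (ENNReal.div_lt_top hμ.ne hs.ne').ne fun x ↦ ?_
  have hI : I ≤ μ (closedBall x s) := iInf_le _ x
  have hI_ne_top : I ≠ ⊤ := ne_top_of_le_ne_top hμ.ne (hI.trans (measure_mono (subset_univ _)))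
  calc μ (closedBall x (2 * s)) ≤ μ univ := measure_mono (subset_univ _)
    _ = μ univ / I * I := (ENNReal.div_mul_cancel hs.ne' hI_ne_top).symm
    _ ≤ μ univ / I * μ (closedBall x s) := by gcongr

lemma exists_measure_closedBall_two_pow_mul_le (hd : ∀ t : ℝ, 0 < t → DoublingAt μ t)
    (hs : 0 < s) (k : ℕ) :
    ∃ C : ENNReal, C ≠ ⊤ ∧ ∀ x : X, μ (closedBall x (2 ^ k * s)) ≤ C * μ (closedBall x s) := by
  induction k with
  | zero => exact ⟨1, ENNReal.one_ne_top, fun x ↦ by simp⟩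
  | succ k ih =>
    obtain ⟨C, hC, hCle⟩ := ih
    obtain ⟨γ, -, hγ⟩ := hd (2 ^ k * s) (by positivity)
    refine ⟨ENNReal.ofReal γ * C, ENNReal.mul_ne_top ENNReal.ofReal_ne_top hC, fun x ↦ ?_⟩
    calc μ (closedBall x (2 ^ (k + 1) * s)) = μ (closedBall x (2 * (2 ^ k * s))) := by ring_nf
      _ ≤ ENNReal.ofReal γ * μ (closedBall x (2 ^ k * s)) := hγ x
      _ ≤ ENNReal.ofReal γ * (C * μ (closedBall x s)) := by gcongr; exact hCle x
      _ = ENNReal.ofReal γ * C * μ (closedBall x s) := (mul_assoc _ _ _).symm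

lemma lt_iInf_measure_closedBall_of_doublingAt (hb : Bornology.IsBounded (univ : Set X))
    (hpos : ∀ (x : X) (s : ℝ), 0 < s → 0 < μ (closedBall x s))
    (hd : ∀ t : ℝ, 0 < t → DoublingAt μ t) (hs : 0 < s) : 0 < ⨅ x, μ (closedBall x s) := by
  rcases isEmpty_or_nonempty X with _ | ⟨⟨x₀⟩⟩
  · simp [iInf_of_empty]
  obtain ⟨k, hk⟩ := pow_unbounded_of_one_lt (diam (univ : Set X) / s) one_lt_two
  have hdiam : diam (univ : Set X) ≤ 2 ^ k * s := ((div_lt_iff₀ hs).mp hk).le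
  obtain ⟨C, hC, hCle⟩ := exists_measure_closedBall_two_pow_mul_le hd hs k
  refine (ENNReal.div_pos (hpos x₀ s hs).ne' hC).trans_le (le_iInf fun x ↦ ?_)
  refine ENNReal.div_le_of_le_mul' ((measure_mono (subset_univ _)).trans ?_)
  rw [← closedBall_eq_univ_of_diam_le hb hdiam x]
  exact hCle x

variable [OpensMeasurableSpace X]

lemma finite_of_pairwise_lt_dist {ι : Type*} {u : ι → X} {r : ℝ}
    (hu : Pairwise fun i j ↦ 2 * r < dist (u i) (u j)) (hμ : μ univ < ⊤)
    (hr : 0 < ⨅ x, μ (closedBall x r)) : Finite ι := by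
  have hdisj : Pairwise (Function.onFun Disjoint fun i ↦ closedBall (u i) r) := fun i j hij ↦
    closedBall_disjoint_closedBall (by linarith [hu hij])
  have hfin := Measure.finite_const_le_meas_of_disjoint_iUnion μ hr
    (fun i ↦ measurableSet_closedBall) hdisj
    (ne_top_of_le_ne_top hμ.ne (measure_mono (subset_univ _)))
  rw [← finite_univ_iff]
  exact hfin.subset fun i _ ↦ iInf_le (fun x ↦ μ (closedBall x r)) (u i)

lemma totallyBounded_univ_of_lt_iInf_measure_closedBall (hμ : μ univ < ⊤)
    (hinf : ∀ s : ℝ, 0 < s → 0 < ⨅ x, μ (closedBall x s)) : TotallyBounded (univ : Set X) := by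
  by_contra htb
  obtain ⟨ε, hε, u, -, hu⟩ := exists_pairwise_le_dist_of_not_totallyBounded htb
  have hsep : Pairwise fun m n ↦ 2 * (ε / 3) < dist (u m) (u n) := fun m n hmn ↦ by
    linarith [hu hmn]
  have := finite_of_pairwise_lt_dist hsep hμ (hinf _ (by positivity))
  exact not_finite ℕ

end PseudoMetric

/-- For a Borel metric measure space whose closed balls have positive
finite measure, the following are equivalent:
(i) `X` is totally bounded;
(ii) `μ(X) < ∞` and `inf_x μ(B(x,s)) > 0` for every `s > 0`;
(iii) `X` is bounded and `s`-doubling for every `s > 0`. -/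
theorem statement_6 {X : Type*} [MetricSpace X] [MeasurableSpace X] [BorelSpace X]
    (μ : Measure X)
    (hball : ∀ (x : X) (s : ℝ), 0 < s → 0 < μ (closedBall x s) ∧ μ (closedBall x s) < ⊤) :
    (TotallyBounded (Set.univ : Set X) ↔
      (μ Set.univ < ⊤ ∧ ∀ s : ℝ, 0 < s → 0 < ⨅ x : X, μ (closedBall x s))) ∧
    ((μ Set.univ < ⊤ ∧ ∀ s : ℝ, 0 < s → 0 < ⨅ x : X, μ (closedBall x s)) ↔
      (Bornology.IsBounded (Set.univ : Set X) ∧ ∀ s : ℝ, 0 < s → DoublingAt μ s)) := by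
  have hpos := fun x s hs ↦ (hball x s hs).1
  have hfin := fun x s hs ↦ (hball x s hs).2
  have ii_to_i := fun h : μ univ < ⊤ ∧ ∀ s : ℝ, 0 < s → 0 < ⨅ x : X, μ (closedBall x s) ↦
    totallyBounded_univ_of_lt_iInf_measure_closedBall h.1 h.2
  refine ⟨⟨fun htb ↦ ?_, ii_to_i⟩, ⟨fun h ↦ ?_, fun ⟨hb, hd⟩ ↦ ?_⟩⟩
  · exact ⟨measure_univ_lt_top_of_isBounded htb.isBounded hfin,
      fun s hs ↦ htb.lt_iInf_measure_closedBall hpos hs⟩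
  · exact ⟨(ii_to_i h).isBounded, fun s hs ↦ doublingAt_of_measure_univ_lt_top h.1 (h.2 s hs)⟩
  · exact ⟨measure_univ_lt_top_of_isBounded hb hfin,
      fun s hs ↦ lt_iInf_measure_closedBall_of_doublingAt hb hpos hd hs⟩
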